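/- The arc length L = ∫_0^1 √(1 + f(t)²) dt of the graph of the antiderivative F(x) = ∫_0^x f(t) dt over [0,1] satisfies √5 / 2 ≤ L ≤ 3/2. -/

import Mathlib

/-!
Both bounds come from the single fact that `f` has mean `1/2` on `[0,1]`: integrating the
functional equations over `[0,1]` gives `3 I = (2/3) I + (1/3)(1 + I) + 1/3 + (2/3) I` for
`I = ∫ f`. The tangent line of `y ↦ √(1 + y²)` at `y = 1/2` is `(2 + y)/√5`, which gives the
lower bound; the upper bound uses `√(1 + y²) ≤ 1 + y`, valid since `f ≥ 0` (at a minimum of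
`f` the functional equations force a nonnegative value).
-/

open intervalIntegral Set
open MeasureTheory (volume)

def SatisfiesKatsuuraEquations (f : ℝ → ℝ) : Prop :=
  (∀ x ∈ Icc (0:ℝ) 1, f (x / 3) = (2/3) * f x) ∧
  (∀ x ∈ Icc (0:ℝ) 1, f ((2 - x) / 3) = (1/3) * (1 + f x)) ∧
  (∀ x ∈ Icc (0:ℝ) 1, f ((2 + x) / 3) = 1/3 + (2/3) * f x)

lemma exists_mem_Icc_katsuura_preimage {x : ℝ} (hx : x ∈ Icc (0:ℝ) 1) :
    ∃ y ∈ Icc (0:ℝ) 1, x = y / 3 ∨ x = (2 - y) / 3 ∨ x = (2 + y) / 3 := by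
  obtain ⟨hx0, hx1⟩ := hx
  rcases le_or_gt x (1/3) with h₁ | h₁
  · exact ⟨3 * x, ⟨by linarith, by linarith⟩, Or.inl (by ring)⟩
  rcases le_or_gt x (2/3) with h₂ | h₂
  · exact ⟨2 - 3 * x, ⟨by linarith, by linarith⟩, Or.inr (Or.inl (by ring))⟩
  · exact ⟨3 * x - 2, ⟨by linarith, by linarith⟩, Or.inr (Or.inr (by ring))⟩

lemma SatisfiesKatsuuraEquations.nonneg {f : ℝ → ℝ} (hf : SatisfiesKatsuuraEquations f)
    (hcont : ContinuousOn f (Icc 0 1)) {x : ℝ} (hx : x ∈ Icc (0:ℝ) 1) : 0 ≤ f x := by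
  obtain ⟨hw1, hw2, hw3⟩ := hf
  obtain ⟨m, hm, hmin⟩ := isCompact_Icc.exists_isMinOn ⟨0, by norm_num⟩ hcont
  suffices 0 ≤ f m from this.trans (hmin hx)
  obtain ⟨y, hy, rfl | rfl | rfl⟩ := exists_mem_Icc_katsuura_preimage hm
  · linarith [hw1 y hy, isMinOn_iff.mp hmin y hy]
  · linarith [hw2 y hy, isMinOn_iff.mp hmin y hy]
  · linarith [hw3 y hy, isMinOn_iff.mp hmin y hy]

lemma integral_unitInterval_eq_sum_thirds {g : ℝ → ℝ} (hg : IntervalIntegrable g volume 0 1) :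
    3 * ∫ x in (0:ℝ)..1, g x =
      (∫ x in (0:ℝ)..1, g (x / 3)) + (∫ x in (0:ℝ)..1, g ((2 - x) / 3)) +
        ∫ x in (0:ℝ)..1, g ((2 + x) / 3) := by
  have hsub : ∀ a b : ℝ, 0 ≤ a → a ≤ b → b ≤ 1 → IntervalIntegrable g volume a b :=
    fun a b ha hab hb => hg.mono_set (by
      rw [uIcc_of_le hab, uIcc_of_le zero_le_one]; exact Icc_subset_Icc ha hb)
  have hA : ∫ x in (0:ℝ)..1, g (x / 3) = 3 * ∫ x in (0:ℝ)..(1/3), g x := by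
    rw [integral_comp_div g three_ne_zero]; norm_num
  have hB : ∫ x in (0:ℝ)..1, g ((2 - x) / 3) = 3 * ∫ x in (1/3:ℝ)..(2/3), g x := by
    simp_rw [show ∀ x : ℝ, (2 - x) / 3 = 2/3 - x / 3 by intro x; ring]
    rw [integral_comp_sub_div g three_ne_zero]; norm_num
  have hC : ∫ x in (0:ℝ)..1, g ((2 + x) / 3) = 3 * ∫ x in (2/3:ℝ)..1, g x := by
    simp_rw [show ∀ x : ℝ, (2 + x) / 3 = 2/3 + x / 3 by intro x; ring]
    rw [integral_comp_add_div g three_ne_zero]; norm_num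
  have h₁ := hsub 0 (1/3) le_rfl (by norm_num) (by norm_num)
  have h₂ := hsub (1/3) (2/3) (by norm_num) (by norm_num) (by norm_num)
  have h₃ := hsub (2/3) 1 (by norm_num) (by norm_num) le_rfl
  rw [hA, hB, hC, ← integral_add_adjacent_intervals (h₁.trans h₂) h₃,
    ← integral_add_adjacent_intervals h₁ h₂]
  ring

lemma SatisfiesKatsuuraEquations.integral_eq_half {f : ℝ → ℝ}
    (hf : SatisfiesKatsuuraEquations f) (hint : IntervalIntegrable f volume 0 1) :
    ∫ x in (0:ℝ)..1, f x = 1/2 := by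
  obtain ⟨hw1, hw2, hw3⟩ := hf
  have hIcc : ∀ {x : ℝ}, x ∈ uIcc (0:ℝ) 1 → x ∈ Icc (0:ℝ) 1 := fun hx => by
    rwa [uIcc_of_le zero_le_one] at hx
  have hA : ∫ x in (0:ℝ)..1, f (x / 3) = (2/3) * ∫ x in (0:ℝ)..1, f x := by
    rw [← integral_const_mul]
    exact integral_congr fun x hx => hw1 x (hIcc hx)
  have hB : ∫ x in (0:ℝ)..1, f ((2 - x) / 3) = (1/3) * (1 + ∫ x in (0:ℝ)..1, f x) := by
    rw [integral_congr fun x hx => hw2 x (hIcc hx), integral_const_mul,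
      integral_add intervalIntegrable_const hint]
    simp
  have hC : ∫ x in (0:ℝ)..1, f ((2 + x) / 3) = 1/3 + (2/3) * ∫ x in (0:ℝ)..1, f x := by
    rw [integral_congr fun x hx => hw3 x (hIcc hx),
      integral_add intervalIntegrable_const (hint.const_mul _), integral_const_mul]
    simp
  have hsum := integral_unitInterval_eq_sum_thirds hint
  rw [hA, hB, hC] at hsum
  linarith

lemma two_add_le_sqrt_five_mul_sqrt_one_add_sq (y : ℝ) : 2 + y ≤ √5 * √(1 + y ^ 2) := by
  rw [← Real.sqrt_mul (by norm_num)]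
  -- `5 (1 + y²) - (2 + y)² = (1 - 2y)²`
  exact Real.le_sqrt_of_sq_le (by nlinarith [sq_nonneg (1 - 2 * y)])

lemma sqrt_one_add_sq_le_one_add {y : ℝ} (hy : 0 ≤ y) : √(1 + y ^ 2) ≤ 1 + y :=
  (Real.sqrt_le_left (by linarith)).mpr (by nlinarith)

theorem bourbaki_stmt_general (f : ℝ → ℝ)
    (hcont : ContinuousOn f (Set.Icc 0 1))
    (hw1 : ∀ x ∈ Set.Icc (0:ℝ) 1, f (x / 3) = (2/3) * f x)
    (hw2 : ∀ x ∈ Set.Icc (0:ℝ) 1, f ((2 - x) / 3) = (1/3) * (1 + f x))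
    (hw3 : ∀ x ∈ Set.Icc (0:ℝ) 1, f ((2 + x) / 3) = 1/3 + (2/3) * f x) :
    Real.sqrt 5 / 2 ≤ (∫ t in (0:ℝ)..1, Real.sqrt (1 + (f t) ^ 2)) ∧ (∫ t in (0:ℝ)..1, Real.sqrt (1 + (f t) ^ 2)) ≤ 3/2 := by
  have hf : SatisfiesKatsuuraEquations f := ⟨hw1, hw2, hw3⟩
  have hcont' : ContinuousOn f (uIcc 0 1) := by rwa [uIcc_of_le zero_le_one]
  have hint : IntervalIntegrable f volume 0 1 := hcont'.intervalIntegrable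
  have hsqrt : IntervalIntegrable (fun t => √(1 + f t ^ 2)) volume 0 1 :=
    (Real.continuous_sqrt.comp_continuousOn
      (continuousOn_const.add (hcont'.pow 2))).intervalIntegrable
  have hmean := hf.integral_eq_half hint
  constructor
  · have hlow : ∫ t in (0:ℝ)..1, (2 + f t) ≤ ∫ t in (0:ℝ)..1, √5 * √(1 + f t ^ 2) :=
      integral_mono_on zero_le_one (intervalIntegrable_const.add hint) (hsqrt.const_mul _)
        fun t _ => two_add_le_sqrt_five_mul_sqrt_one_add_sq (f t)
    rw [integral_add intervalIntegrable_const hint, integral_const_mul, hmean,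
      integral_const, smul_eq_mul] at hlow
    have h5 : √5 * √5 = 5 := Real.mul_self_sqrt (by norm_num)
    nlinarith [Real.sqrt_nonneg 5]
  · calc ∫ t in (0:ℝ)..1, √(1 + f t ^ 2) ≤ ∫ t in (0:ℝ)..1, (1 + f t) :=
          integral_mono_on zero_le_one hsqrt (intervalIntegrable_const.add hint)
            fun t ht => sqrt_one_add_sq_le_one_add (hf.nonneg hcont ht)
      _ = 3/2 := by rw [integral_add intervalIntegrable_const hint, hmean]; norm_num

theorem bourbaki_stmt (f : ℝ → ℝ)
    (hcont : ContinuousOn f (Set.Icc 0 1))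
    (h0 : f 0 = 0) (h1 : f 1 = 1)
    (hw1 : ∀ x ∈ Set.Icc (0:ℝ) 1, f (x / 3) = (2/3) * f x)
    (hw2 : ∀ x ∈ Set.Icc (0:ℝ) 1, f ((2 - x) / 3) = (1/3) * (1 + f x))
    (hw3 : ∀ x ∈ Set.Icc (0:ℝ) 1, f ((2 + x) / 3) = 1/3 + (2/3) * f x) :
    Real.sqrt 5 / 2 ≤ (∫ t in (0:ℝ)..1, Real.sqrt (1 + (f t) ^ 2)) ∧ (∫ t in (0:ℝ)..1, Real.sqrt (1 + (f t) ^ 2)) ≤ 3/2 :=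
  bourbaki_stmt_general f hcont hw1 hw2 hw3
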